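/- Let A, B, C be subspaces of E. If A ⊥g∘ B, A ⊥g∘ C, and A ∩ B ∩ C ≠ ∅, then A ⊥g∘ (B ∩ C). -/

import Mathlib

/-- `Perp X Y`: every vector in the direction of `X` is orthogonal to every
vector in the direction of `Y`. -/
def Perp {E : Type*} [NormedAddCommGroup E] [InnerProductSpace ℝ E]
    (X Y : AffineSubspace ℝ E) : Prop :=
  ∀ u ∈ X.direction, ∀ v ∈ Y.direction, (inner ℝ u v : ℝ) = 0

/-- `PerpX X Y`: `X ⊥ Y` and `X ∩ Y ≠ ∅`. -/
def PerpX {E : Type*} [NormedAddCommGroup E] [InnerProductSpace ℝ E]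
    (X Y : AffineSubspace ℝ E) : Prop :=
  Perp X Y ∧ ((X : Set E) ∩ (Y : Set E)).Nonempty

/-- `PerpGo X₁ X₂`: the relation `⊥g∘`. -/
def PerpGo {E : Type*} [NormedAddCommGroup E] [InnerProductSpace ℝ E]
    (X₁ X₂ : AffineSubspace ℝ E) : Prop :=
  ∃ q : E, q ∈ X₁ ⊓ X₂ ∧ ∃ Z₁ Z₂ : AffineSubspace ℝ E,
    q ∈ Z₁ ∧ q ∈ Z₂ ∧ PerpX Z₁ (X₁ ⊓ X₂) ∧ PerpX Z₂ (X₁ ⊓ X₂) ∧ PerpX Z₁ Z₂ ∧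
    (X₁ ⊓ X₂) ⊔ Z₁ = X₁ ∧ (X₁ ⊓ X₂) ⊔ Z₂ = X₂

/-- `PerpG X₁ X₂`: the relation `⊥g`. -/
def PerpG {E : Type*} [NormedAddCommGroup E] [InnerProductSpace ℝ E]
    (X₁ X₂ : AffineSubspace ℝ E) : Prop :=
  PerpGo X₁ X₂ ∧ X₁ ⊓ X₂ ≠ X₁ ∧ X₁ ⊓ X₂ ≠ X₂

/-- Dimension of an affine subspace: the dimension of its direction. -/
noncomputable def adim {E : Type*} [NormedAddCommGroup E] [InnerProductSpace ℝ E]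
    (X : AffineSubspace ℝ E) : ℕ :=
  Module.finrank ℝ X.direction

variable {E : Type*} [NormedAddCommGroup E] [InnerProductSpace ℝ E] [FiniteDimensional ℝ E]

/-!
Through a common point, `X ⊥g∘ Y` amounts to `Y.direction ≤ (X ⊓ Y).direction ⊔ X.directionᗮ`:
every direction of `Y` is a direction of `X ⊓ Y` plus a vector orthogonal to `X`; conversely, the
orthogonal complements of `(X ⊓ Y).direction` inside `X` and inside `Y` serve as `Z₁` and `Z₂`.
For `B ⊓ C`, intersect the conditions for `B` and `C`: as `A.direction` meets its orthogonal
complement only in `0`, the modular law gives `(U ⊔ Aᗮ) ⊓ (U' ⊔ Aᗮ) = (U ⊓ U') ⊔ Aᗮ` for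
`U, U' ≤ A.direction`.
-/

theorem sup_inf_sup_eq_inf_sup_of_disjoint {α : Type*} [Lattice α] [OrderBot α]
    [IsModularLattice α] {a b c k : α} (ha : a ≤ k) (hb : b ≤ k) (hk : Disjoint k c) :
    (a ⊔ c) ⊓ (b ⊔ c) = a ⊓ b ⊔ c := by
  have hcut : ∀ x ≤ k, (x ⊔ c) ⊓ k = x := fun x hx => by
    rw [sup_inf_assoc_of_le c hx, hk.symm.eq_bot, sup_bot_eq]
  have hle : (a ⊔ c) ⊓ (b ⊔ c) ≤ c ⊔ k :=
    inf_le_left.trans (sup_comm a c ▸ sup_le_sup_left ha c)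
  calc (a ⊔ c) ⊓ (b ⊔ c) = (c ⊔ k) ⊓ ((a ⊔ c) ⊓ (b ⊔ c)) := (inf_eq_right.2 hle).symm
    _ = c ⊔ k ⊓ ((a ⊔ c) ⊓ (b ⊔ c)) := sup_inf_assoc_of_le _ (le_inf le_sup_right le_sup_right)
    _ = c ⊔ ((a ⊔ c) ⊓ k) ⊓ ((b ⊔ c) ⊓ k) := by rw [inf_inf_distrib_left, inf_comm k, inf_comm k]
    _ = a ⊓ b ⊔ c := by rw [hcut a ha, hcut b hb, sup_comm]

theorem AffineSubspace.direction_sup_of_mem {k V P : Type*} [Ring k] [AddCommGroup V]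
    [Module k V] [AddTorsor V P] {s₁ s₂ : AffineSubspace k P} {p : P} (h₁ : p ∈ s₁)
    (h₂ : p ∈ s₂) : (s₁ ⊔ s₂).direction = s₁.direction ⊔ s₂.direction := by
  rw [AffineSubspace.direction_sup h₁ h₂, vsub_self, Submodule.span_zero_singleton, sup_bot_eq]

section PerpGo

variable {V : Type*} [NormedAddCommGroup V] [InnerProductSpace ℝ V] {X Y : AffineSubspace ℝ V}

open AffineSubspace Submodule

theorem perp_iff_isOrtho : Perp X Y ↔ X.direction ⟂ Y.direction :=
  isOrtho_iff_inner_eq.symm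

theorem PerpGo.direction_le_sup_orthogonal (h : PerpGo X Y) :
    Y.direction ≤ (X ⊓ Y).direction ⊔ X.directionᗮ := by
  obtain ⟨q, hq, Z₁, Z₂, hqZ₁, hqZ₂, hZ₁, hZ₂, hZ₁₂, hX, hY⟩ := h
  have hdirX : X.direction = (X ⊓ Y).direction ⊔ Z₁.direction := by
    rw [← direction_sup_of_mem hq hqZ₁, hX]
  have hdirY : Y.direction = (X ⊓ Y).direction ⊔ Z₂.direction := by
    rw [← direction_sup_of_mem hq hqZ₂, hY]
  have hZ₂X : Z₂.direction ⟂ X.direction := by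
    rw [hdirX, isOrtho_sup_right]
    exact ⟨perp_iff_isOrtho.1 hZ₂.1, (perp_iff_isOrtho.1 hZ₁₂.1).symm⟩
  rw [hdirY]
  exact sup_le_sup_left hZ₂X _

theorem sup_mk'_orthogonal_inf_direction {p : V} (hpX : p ∈ X) (hpY : p ∈ Y)
    [X.direction.HasOrthogonalProjection] (hle : X.direction ≤ Y.direction) :
    X ⊔ mk' p (X.directionᗮ ⊓ Y.direction) = Y := by
  refine ext_of_direction_eq ?_ ⟨p, le_sup_left (a := X) hpX, hpY⟩
  rw [direction_sup_of_mem hpX (self_mem_mk' _ _), direction_mk']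
  exact sup_orthogonal_inf_of_hasOrthogonalProjection hle

theorem perpGo_of_direction_le_sup_orthogonal {p : V} (hp : p ∈ X ⊓ Y)
    [(X ⊓ Y).direction.HasOrthogonalProjection]
    (h : Y.direction ≤ (X ⊓ Y).direction ⊔ X.directionᗮ) : PerpGo X Y := by
  set D := (X ⊓ Y).direction
  have hperp : ∀ W : Submodule ℝ V, PerpX (mk' p (Dᗮ ⊓ W)) (X ⊓ Y) := fun W =>
    ⟨perp_iff_isOrtho.2 <| by rw [direction_mk']; exact isOrtho_iff_le.2 inf_le_left,
      p, self_mem_mk' _ _, hp⟩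
  refine ⟨p, hp, _, _, self_mem_mk' p (Dᗮ ⊓ X.direction), self_mem_mk' p (Dᗮ ⊓ Y.direction),
    hperp _, hperp _, ⟨?_, p, self_mem_mk' _ _, self_mem_mk' _ _⟩,
    sup_mk'_orthogonal_inf_direction hp hp.1 (direction_le inf_le_left),
    sup_mk'_orthogonal_inf_direction hp hp.2 (direction_le inf_le_right)⟩
  rw [perp_iff_isOrtho, direction_mk', direction_mk']
  refine IsOrtho.mono_right (inf_le_right.trans h) (isOrtho_sup_right.2 ⟨?_, ?_⟩)
  · exact (isOrtho_orthogonal_left D).mono_left inf_le_left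
  · exact (isOrtho_orthogonal_right X.direction).mono_left inf_le_right

end PerpGo

theorem stmt19_general (A B C : AffineSubspace ℝ E)
    (h₁ : PerpGo A B) (h₂ : PerpGo A C)
    (h₃ : ((A : Set E) ∩ (B : Set E) ∩ (C : Set E)).Nonempty) :
    PerpGo A (B ⊓ C) := by
  obtain ⟨p, ⟨hpA, hpB⟩, hpC⟩ := h₃
  have hpBC : p ∈ B ⊓ C := ⟨hpB, hpC⟩
  have hdir : (A ⊓ B).direction ⊓ (A ⊓ C).direction = (A ⊓ (B ⊓ C)).direction := by
    rw [AffineSubspace.direction_inf_of_mem hpA hpB, AffineSubspace.direction_inf_of_mem hpA hpC,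
      AffineSubspace.direction_inf_of_mem hpA hpBC,
      AffineSubspace.direction_inf_of_mem hpB hpC, ← inf_inf_distrib_left]
  refine perpGo_of_direction_le_sup_orthogonal ⟨hpA, hpBC⟩ ?_
  calc (B ⊓ C).direction = B.direction ⊓ C.direction :=
        AffineSubspace.direction_inf_of_mem hpB hpC
    _ ≤ ((A ⊓ B).direction ⊔ A.directionᗮ) ⊓ ((A ⊓ C).direction ⊔ A.directionᗮ) :=
        inf_le_inf h₁.direction_le_sup_orthogonal h₂.direction_le_sup_orthogonal
    _ = (A ⊓ (B ⊓ C)).direction ⊔ A.directionᗮ := by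
        rw [sup_inf_sup_eq_inf_sup_of_disjoint (AffineSubspace.direction_le inf_le_left)
          (AffineSubspace.direction_le inf_le_left) A.direction.orthogonal_disjoint, hdir]

theorem stmt19 (A B C : AffineSubspace ℝ E)
    (hA : (A : Set E).Nonempty) (hB : (B : Set E).Nonempty) (hC : (C : Set E).Nonempty)
    (h₁ : PerpGo A B) (h₂ : PerpGo A C)
    (h₃ : ((A : Set E) ∩ (B : Set E) ∩ (C : Set E)).Nonempty) :
    PerpGo A (B ⊓ C) :=
  stmt19_general A B C h₁ h₂ h₃
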